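/- arXiv:1608.00933 — 2 statements merged into one kernel-verified Lean document; each statement's English description precedes it below -/
import Mathlib

section
/- Each subcomplex |M^{[n,k]}| of the order complex of M^n has finitely many G_n-orbits of simplices. Concretely: the dimension of |M^n| is bounded, and for each p the map sending the orbit of a p-simplex (α₀,…,α_p) to (gr(α₀), (t^{(1)},…,t^{(p)})) ∈ [n,k] × (T_{≤k})^p is a well-defined injection into a finite set. -/
open Function

/-- The set `S = (ℕ × ℕ) × {1,…,n}`, a disjoint union of `n` quadrants. -/
abbrev QSet (n : ℕ) := (ℕ × ℕ) × Fin n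

/-- The translation of `S` with parameters `m : Fin n → ℕ`, shifting the `i`-th quadrant
diagonally by `m i`. -/
def translMap {n : ℕ} (m : Fin n → ℕ) : QSet n → QSet n :=
  fun p => ((p.1.1 + m p.2, p.1.2 + m p.2), p.2)

/-- The generator `tᵢ` of the translation monoid `T`: diagonal shift by `1` on quadrant `Qᵢ`,
identity elsewhere. -/
def tgen {n : ℕ} (i : Fin n) : QSet n → QSet n :=
  translMap (fun j => if j = i then 1 else 0)

/-- The defining conditions of the monoid `M`: `g` is injective, eventually a diagonal
translation on each quadrant (B₁), and maps each vertical (resp. horizontal) half-line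
order-preservingly onto a shifted vertical (resp. horizontal) half-line (B₂(a), B₂(b)). -/
def MCond {n : ℕ} (g : QSet n → QSet n) : Prop :=
  Function.Injective g ∧
  ∃ (x₀ y₀ : ℕ) (m : Fin n → ℤ),
    (∀ (x y : ℕ) (i : Fin n), x₀ ≤ x → y₀ ≤ y →
      (g ((x, y), i)).2 = i ∧
      ((g ((x, y), i)).1.1 : ℤ) = (x : ℤ) + m i ∧
      ((g ((x, y), i)).1.2 : ℤ) = (y : ℤ) + m i) ∧
    (∀ (x : ℕ) (i : Fin n), ∃ (q : ℤ) (x' : ℕ) (i' : Fin n),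
      ∀ y : ℕ, y₀ ≤ y →
        (g ((x, y), i)).1.1 = x' ∧ (g ((x, y), i)).2 = i' ∧
        ((g ((x, y), i)).1.2 : ℤ) = (y : ℤ) + q) ∧
    (∀ (y : ℕ) (i : Fin n), ∃ (r : ℤ) (y' : ℕ) (i' : Fin n),
      ∀ x : ℕ, x₀ ≤ x →
        (g ((x, y), i)).1.2 = y' ∧ (g ((x, y), i)).2 = i' ∧
        ((g ((x, y), i)).1.1 : ℤ) = (x : ℤ) + r)

/-- The monoid `M` of injective self-maps of `S` satisfying B₁ and B₂. -/
def MMon (n : ℕ) := {g : QSet n → QSet n // MCond g}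

/-- The order on `M`: `α ≤ β` iff `β = t α` for some translation `t ∈ T`
(maps act on the right, so `t α` means "first `t`, then `α`"). -/
def Mle {n : ℕ} (α β : MMon n) : Prop :=
  ∃ m : Fin n → ℕ, ∀ s, α.1 (translMap m s) = β.1 s

/-- The strict order on `M`. -/
def Mlt {n : ℕ} (α β : MMon n) : Prop := Mle α β ∧ α ≠ β

/-- The degree `gr(α)`: the number of vertical half-lines occurring in the canonical
decomposition of `S - Sα`, i.e. the number of `(x,i)` such that the vertical half-line over
`(x,i)` eventually avoids the image of `α`. -/
noncomputable def gr {n : ℕ} (α : QSet n → QSet n) : ℕ :=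
  Nat.card {p : ℕ × Fin n // ∃ N : ℕ, ∀ y : ℕ, N ≤ y → ((p.1, y), p.2) ∉ Set.range α}

/-- A `p`-simplex of the subcomplex `|M^{[n,k]}|`: a strict chain in `M` all of whose
vertices have degree between `n` and `k`. -/
def IsSimplexNK (n k p : ℕ) (α : Fin (p + 1) → MMon n) : Prop :=
  (∀ i j : Fin (p + 1), i < j → Mlt (α i) (α j)) ∧
  ∀ j, n ≤ gr (α j).1 ∧ gr (α j).1 ≤ k

/-!
Counting the columns of quadrant `i` left of `x₀ + mᵢ` shows that the degree of `α ∈ M`, the number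
of columns it eventually misses, equals the total diagonal shift `∑ mᵢ`; by symmetry this is also
the number of rows it eventually misses. If `β = t α` for a translation `t ≠ 1`, the images under
`α` of the columns missed by `t` are missed by `β`, so the degree increases strictly along a chain,
which bounds the dimension.

For the orbits, the complement of the image of `α` is the union of `gr α` column rays, `gr α` row
rays and a finite set. For `α`, `β` of the same positive degree, Hilbert's hotel gives a bijection
between the two complements that is eventually a shift on every ray, and together with `α ∘ β⁻¹`
it is an element `g ∈ Gₙ` with `g ∘ β = α`. Hence every simplex `(α₀ < ⋯ < α_p)` lies in the orbit
of the chain of translations `tⱼ = t_{u₀ + vⱼ}`, where `α_j = t_{vⱼ} α₀` and `u₀` is `gr α₀` on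
the first quadrant; all entries of these vectors are bounded by `k`.
-/

open Set

section HilbertHotel

variable {K X Y : Type*}

/-- Hilbert's hotel: `u` new guests move into row `k₀` of the rooms `K × ℕ`. -/
def hotelEquiv [DecidableEq K] (k₀ : K) (u : ℕ) : Fin u ⊕ K × ℕ ≃ K × ℕ where
  toFun := Sum.elim (fun i => (k₀, i)) fun p => if p.1 = k₀ then (k₀, p.2 + u) else p
  invFun p :=
    if p.1 = k₀ then (if h : p.2 < u then .inl ⟨p.2, h⟩ else .inr (k₀, p.2 - u)) else .inr p
  left_inv := by
    rintro (i | ⟨k, j⟩)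
    · simp
    · by_cases hk : k = k₀ <;> simp [hk]
  right_inv := by
    rintro ⟨k, j⟩
    by_cases hk : k = k₀
    · subst hk
      by_cases hj : j < u
      · simp [hj]
      · simp only [↓reduceIte, hj, dite_false, Sum.elim_inr, Prod.mk.injEq, true_and]
        omega
    · simp [hk]

theorem hotelEquiv_inr [DecidableEq K] (k₀ : K) (u : ℕ) (p : K × ℕ) :
    hotelEquiv k₀ u (.inr p) = if p.1 = k₀ then (k₀, p.2 + u) else p :=
  rfl

theorem exists_equiv_prod_nat (k₀ : K) {R : K × ℕ → X} (hR : Injective R)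
    (hfin : (range R)ᶜ.Finite) :
    ∃ (E : X ≃ K × ℕ) (u : ℕ), (∀ j, E (R (k₀, j)) = (k₀, j + u)) ∧
      ∀ k ≠ k₀, ∀ j, E (R (k, j)) = (k, j) := by
  classical
  have := hfin.to_subtype
  let E : X ≃ K × ℕ := (Equiv.Set.sumCompl (range R)).symm.trans <| (Equiv.sumComm _ _).trans <|
    (Equiv.sumCongr (Finite.equivFin _) (Equiv.ofInjective R hR).symm).trans (hotelEquiv k₀ _)
  have hE : ∀ p, E (R p) = hotelEquiv k₀ (Nat.card ↥(range R)ᶜ) (.inr p) := fun p => by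
    simp only [E, Equiv.trans_apply, Equiv.Set.sumCompl_symm_apply_of_mem (mem_range_self p),
      Equiv.sumComm_apply, Sum.swap_inl, Equiv.sumCongr_apply, Sum.map_inr,
      Equiv.ofInjective_symm_apply]
  refine ⟨E, Nat.card ↥(range R)ᶜ, fun j => ?_, fun k hk j => ?_⟩
  · rw [hE, hotelEquiv_inr, if_pos rfl]
  · rw [hE, hotelEquiv_inr, if_neg hk]

theorem exists_equiv_eventually_shift (k₀ : K) {R : K × ℕ → X} {R' : K × ℕ → Y}
    (hR : Injective R) (hR' : Injective R') (hfin : (range R)ᶜ.Finite)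
    (hfin' : (range R')ᶜ.Finite) :
    ∃ (E : X ≃ Y) (a : ℕ), ∀ k, ∃ b, ∀ j, E (R (k, j + a)) = R' (k, j + b) := by
  obtain ⟨E, u, hE₀, hE⟩ := exists_equiv_prod_nat k₀ hR hfin
  obtain ⟨E', u', hE₀', hE'⟩ := exists_equiv_prod_nat k₀ hR' hfin'
  refine ⟨E.trans E'.symm, u', fun k => ?_⟩
  by_cases hk : k = k₀
  · subst hk
    refine ⟨u, fun j => ?_⟩
    rw [Equiv.trans_apply, Equiv.symm_apply_eq, hE₀, hE₀', add_right_comm]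
  · exact ⟨u', fun j => by rw [Equiv.trans_apply, Equiv.symm_apply_eq, hE k hk, hE' k hk]⟩

end HilbertHotel

variable {n : ℕ}

section Translations

theorem translMap_translMap (a b : Fin n → ℕ) (s : QSet n) :
    translMap a (translMap b s) = translMap (a + b) s := by
  simp only [translMap, Pi.add_apply, add_comm (a s.2), add_assoc]

theorem translMap_zero : translMap (0 : Fin n → ℕ) = id := rfl

theorem translMap_injective (v : Fin n → ℕ) : Injective (translMap v) := by
  rintro ⟨⟨x, y⟩, i⟩ ⟨⟨x', y'⟩, i'⟩ h
  simp only [translMap, Prod.mk.injEq] at h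
  obtain ⟨⟨hx, hy⟩, rfl⟩ := h
  simp_all

theorem mem_range_translMap {v : Fin n → ℕ} {p : QSet n} :
    p ∈ range (translMap v) ↔ v p.2 ≤ p.1.1 ∧ v p.2 ≤ p.1.2 := by
  refine ⟨?_, fun ⟨hx, hy⟩ => ⟨((p.1.1 - v p.2, p.1.2 - v p.2), p.2), ?_⟩⟩
  · rintro ⟨s, rfl⟩
    simp [translMap]
  · ext <;> simp [translMap] <;> omega

theorem mcond_translMap (v : Fin n → ℕ) : MCond (translMap v) :=
  ⟨translMap_injective v, 0, 0, fun i => v i, fun x y i _ _ => by simp [translMap],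
    fun x i => ⟨v i, x + v i, i, fun y _ => by simp [translMap]⟩,
    fun y i => ⟨v i, y + v i, i, fun x _ => by simp [translMap]⟩⟩

end Translations

theorem finite_setOf_fst_lt_snd_lt (a b : ℕ) : {p : QSet n | p.1.1 < a ∧ p.1.2 < b}.Finite :=
  (((finite_Iio a).prod (finite_Iio b)).prod finite_univ).subset
    fun _ ⟨ha, hb⟩ => ⟨⟨ha, hb⟩, trivial⟩

theorem setOf_fst_lt_eq_range (f : Fin n → ℕ) :
    {c : ℕ × Fin n | c.1 < f c.2} = range fun p : Σ i, Fin (f i) => ((p.2 : ℕ), p.1) := by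
  ext ⟨x, i⟩
  exact ⟨fun h => ⟨⟨i, x, h⟩, rfl⟩, by rintro ⟨⟨i, x, h⟩, hx⟩; cases hx; exact h⟩

theorem finite_setOf_fst_lt (f : Fin n → ℕ) : {c : ℕ × Fin n | c.1 < f c.2}.Finite :=
  setOf_fst_lt_eq_range f ▸ finite_range _

theorem ncard_setOf_fst_lt (f : Fin n → ℕ) : {c : ℕ × Fin n | c.1 < f c.2}.ncard = ∑ i, f i := by
  rw [setOf_fst_lt_eq_range, ncard_range_of_injective, Nat.card_sigma]
  · simp
  · rintro ⟨i, x, hx⟩ ⟨i', x', hx'⟩ h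
    simp only [Prod.mk.injEq] at h
    obtain ⟨rfl, rfl⟩ := h
    rfl

def missingColumns (α : QSet n → QSet n) : Set (ℕ × Fin n) :=
  {c | ∃ N : ℕ, ∀ y : ℕ, N ≤ y → ((c.1, y), c.2) ∉ range α}

theorem gr_eq_ncard (α : QSet n → QSet n) : gr α = (missingColumns α).ncard := by
  rw [gr, ← Nat.card_coe_set_eq]
  rfl

theorem missingColumns_translMap (v : Fin n → ℕ) :
    missingColumns (translMap v) = {c | c.1 < v c.2} := by
  ext c
  simp only [missingColumns, mem_range_translMap, mem_ofPred_eq, not_and, not_le]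
  refine ⟨fun ⟨N, hN⟩ => ?_, fun hc => ⟨0, fun y _ h => absurd h (not_le.2 hc)⟩⟩
  by_contra! hc
  exact (hN (N + v c.2) (Nat.le_add_right _ _) hc).not_ge (Nat.le_add_left _ _)

theorem gr_translMap (v : Fin n → ℕ) : gr (translMap v) = ∑ i, v i := by
  rw [gr_eq_ncard, missingColumns_translMap, ncard_setOf_fst_lt]

def IsThreshold (α : QSet n → QSet n) (N : ℕ) : Prop :=
  (∀ x y i, N ≤ y → ((((x, y), i) : QSet n) ∈ range α ↔ (x, i) ∉ missingColumns α)) ∧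
    ∀ c ∈ missingColumns α, c.1 < N

theorem IsThreshold.mono {α : QSet n → QSet n} {N N' : ℕ} (h : IsThreshold α N) (hN : N ≤ N') :
    IsThreshold α N' :=
  ⟨fun x y i hy => h.1 x y i (hN.trans hy), fun c hc => (h.2 c hc).trans_le hN⟩

/-- Condition B₂(a) of `MCond`, for the columns in `cs` only. -/
def ShiftsColumns (g : QSet n → QSet n) (cs : Set (ℕ × Fin n)) (y₀ : ℕ) : Prop :=
  ∀ c ∈ cs, ∃ (q : ℤ) (x' : ℕ) (i' : Fin n), ∀ y : ℕ, y₀ ≤ y →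
    (g ((c.1, y), c.2)).1.1 = x' ∧ (g ((c.1, y), c.2)).2 = i' ∧
      ((g ((c.1, y), c.2)).1.2 : ℤ) = y + q

theorem ShiftsColumns.mono {g : QSet n → QSet n} {cs : Set (ℕ × Fin n)} {y₀ y₁ : ℕ}
    (h : ShiftsColumns g cs y₀) (hy : y₀ ≤ y₁) : ShiftsColumns g cs y₁ := fun c hc =>
  let ⟨q, x', i', h'⟩ := h c hc
  ⟨q, x', i', fun y hy' => h' y (hy.trans hy')⟩

namespace QSet

def swap (p : QSet n) : QSet n := ((p.1.2, p.1.1), p.2)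

@[simp]
theorem swap_swap (p : QSet n) : swap (swap p) = p := rfl

theorem swap_injective : Injective (swap : QSet n → QSet n) :=
  fun p q h => by simpa using congrArg swap h

/-- Statements about rows of `α` are statements about columns of `transpose α`. -/
def transpose (α : QSet n → QSet n) : QSet n → QSet n := fun p => swap (α (swap p))

theorem mem_range_transpose {α : QSet n → QSet n} {p : QSet n} :
    p ∈ range (transpose α) ↔ swap p ∈ range α :=
  ⟨fun ⟨s, hs⟩ => ⟨swap s, by rw [← hs]; rfl⟩,
    fun ⟨s, hs⟩ => ⟨swap s, by rw [transpose, swap_swap, hs, swap_swap]⟩⟩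

end QSet

open QSet

/-- The witnesses of `MCond α`, with the targets and shifts in B₂ chosen as functions of the
half-line. -/
structure MData (α : QSet n → QSet n) where
  inj : Injective α
  x₀ : ℕ
  y₀ : ℕ
  m : Fin n → ℤ
  colTgt : ℕ × Fin n → ℕ × Fin n
  colShift : ℕ × Fin n → ℤ
  rowTgt : ℕ × Fin n → ℕ × Fin n
  rowShift : ℕ × Fin n → ℤ
  diag : ∀ (x y : ℕ) (i : Fin n), x₀ ≤ x → y₀ ≤ y → (α ((x, y), i)).2 = i ∧
    ((α ((x, y), i)).1.1 : ℤ) = x + m i ∧ ((α ((x, y), i)).1.2 : ℤ) = y + m i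
  col : ∀ (c : ℕ × Fin n) (y : ℕ), y₀ ≤ y → (α ((c.1, y), c.2)).1.1 = (colTgt c).1 ∧
    (α ((c.1, y), c.2)).2 = (colTgt c).2 ∧ ((α ((c.1, y), c.2)).1.2 : ℤ) = y + colShift c
  row : ∀ (c : ℕ × Fin n) (x : ℕ), x₀ ≤ x → (α ((x, c.1), c.2)).1.2 = (rowTgt c).1 ∧
    (α ((x, c.1), c.2)).2 = (rowTgt c).2 ∧ ((α ((x, c.1), c.2)).1.1 : ℤ) = x + rowShift c

theorem MCond.nonempty_mData {α : QSet n → QSet n} (h : MCond α) : Nonempty (MData α) := by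
  obtain ⟨hinj, x₀, y₀, m, hdiag, hcol, hrow⟩ := h
  choose q x' i' hq using hcol
  choose r y' i'' hr using hrow
  exact ⟨⟨hinj, x₀, y₀, m, fun c => (x' c.1 c.2, i' c.1 c.2), fun c => q c.1 c.2,
    fun c => (y' c.1 c.2, i'' c.1 c.2), fun c => r c.1 c.2, hdiag,
    fun c y hy => hq c.1 c.2 y hy, fun c x hx => hr c.1 c.2 x hx⟩⟩

namespace MData

variable {α : QSet n → QSet n} (W : MData α)

def transpose : MData (QSet.transpose α) where
  inj _ _ h := swap_injective (W.inj (swap_injective h))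
  x₀ := W.y₀
  y₀ := W.x₀
  m := W.m
  colTgt := W.rowTgt
  colShift := W.rowShift
  rowTgt := W.colTgt
  rowShift := W.colShift
  diag x y i hx hy := by
    obtain ⟨h₁, h₂, h₃⟩ := W.diag y x i hy hx
    exact ⟨h₁, h₃, h₂⟩
  col c y hy := W.row c y hy
  row c x hx := W.col c x hx

theorem apply_col (c : ℕ × Fin n) {y : ℕ} (hy : W.y₀ ≤ y) :
    α ((c.1, y), c.2) = (((W.colTgt c).1, (y + W.colShift c).toNat), (W.colTgt c).2) := by
  obtain ⟨h₁, h₂, h₃⟩ := W.col c y hy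
  exact Prod.ext (Prod.ext h₁ (by simp only; omega)) h₂

theorem colTgt_of_le {x : ℕ} (hx : W.x₀ ≤ x) (i : Fin n) :
    ((W.colTgt (x, i)).1 : ℤ) = x + W.m i ∧ (W.colTgt (x, i)).2 = i ∧ W.colShift (x, i) = W.m i := by
  obtain ⟨h₁, h₂, h₃⟩ := W.col (x, i) W.y₀ le_rfl
  dsimp only at h₁ h₂ h₃
  obtain ⟨g₁, g₂, g₃⟩ := W.diag x W.y₀ i hx le_rfl
  refine ⟨?_, ?_, ?_⟩
  · rw [← h₁]; exact g₂
  · rw [← h₂]; exact g₁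
  · omega

theorem mem_range_of_colTgt (c : ℕ × Fin n) {y : ℕ} (hy : (W.y₀ : ℤ) + W.colShift c ≤ y) :
    (((W.colTgt c).1, y), (W.colTgt c).2) ∈ range α :=
  ⟨((c.1, (y - W.colShift c).toNat), c.2), by rw [W.apply_col c (by omega)]; congr; omega⟩

theorem colTgt_injective : Injective W.colTgt := by
  intro c c' h
  set y : ℕ := (W.y₀ + W.colShift c).toNat + (W.y₀ + W.colShift c').toNat
  have key : α ((c.1, (y - W.colShift c).toNat), c.2) =
      α ((c'.1, (y - W.colShift c').toNat), c'.2) := by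
    rw [W.apply_col c (by omega), W.apply_col c' (by omega), h]
    congr 2
    omega
  simp only [W.inj.eq_iff, Prod.mk.injEq] at key
  exact Prod.ext key.1.1 key.2

theorem exists_colShift_le : ∃ Q : ℤ, ∀ c, W.colShift c ≤ Q := by
  have hfin : (range W.colShift).Finite := by
    refine (((finite_setOf_fst_lt fun _ => W.x₀).image W.colShift).union
      (finite_range W.m)).subset ?_
    rintro _ ⟨c, rfl⟩
    by_cases hc : c.1 < W.x₀
    · exact Or.inl ⟨c, hc, rfl⟩
    · exact Or.inr ⟨c.2, (W.colTgt_of_le (not_lt.1 hc) c.2).2.2.symm⟩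
  obtain ⟨Q, hQ⟩ := hfin.bddAbove
  exact ⟨Q, fun c => hQ ⟨c, rfl⟩⟩

theorem exists_height_lt : ∃ H : ℕ, ∀ x y i, y < W.y₀ → (α ((x, y), i)).1.2 < H := by
  have hfin : {h | ∃ (x y : ℕ) (i : Fin n), y < W.y₀ ∧ (α ((x, y), i)).1.2 = h}.Finite := by
    refine (((finite_setOf_fst_lt_snd_lt W.x₀ W.y₀).image fun p => (α p).1.2).union
      ((finite_setOf_fst_lt fun _ => W.y₀).image fun c => (W.rowTgt c).1)).subset ?_
    rintro _ ⟨x, y, i, hy, rfl⟩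
    by_cases hx : x < W.x₀
    · exact Or.inl ⟨((x, y), i), ⟨hx, hy⟩, rfl⟩
    · exact Or.inr ⟨(y, i), hy, (W.row (y, i) x (not_lt.1 hx)).1.symm⟩
  obtain ⟨H, hH⟩ := hfin.bddAbove
  exact ⟨H + 1, fun x y i hy => Nat.lt_succ_of_le (hH ⟨x, y, i, hy, rfl⟩)⟩

theorem exists_mem_range_iff : ∃ N : ℕ, ∀ x y i, N ≤ y →
    ((((x, y), i) : QSet n) ∈ range α ↔ (x, i) ∈ range W.colTgt) := by
  obtain ⟨Q, hQ⟩ := W.exists_colShift_le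
  obtain ⟨H, hH⟩ := W.exists_height_lt
  refine ⟨H + (W.y₀ + Q).toNat, fun x y i hy => ⟨?_, fun ⟨c, hc⟩ => ?_⟩⟩
  · rintro ⟨⟨⟨a, b⟩, j⟩, hs⟩
    have hb : W.y₀ ≤ b := by
      by_contra! hb
      have := hH a b j hb
      rw [hs] at this
      dsimp only at this
      omega
    have := W.apply_col (a, j) hb
    dsimp only at this
    rw [this, Prod.mk.injEq, Prod.mk.injEq] at hs
    exact ⟨(a, j), Prod.ext hs.1.1 hs.2⟩
  · have := W.mem_range_of_colTgt c (y := y) (by have := hQ c; omega)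
    rwa [hc] at this

theorem missingColumns_eq : missingColumns α = (range W.colTgt)ᶜ := by
  obtain ⟨N, hN⟩ := W.exists_mem_range_iff
  ext c
  exact ⟨fun ⟨M, hM⟩ hc => hM (max M N) (le_max_left _ _) ((hN _ _ _ (le_max_right _ _)).2 hc),
    fun hc => ⟨N, fun y hy h => hc ((hN _ _ _ hy).1 h)⟩⟩

theorem x₀_add_m_nonneg (i : Fin n) : 0 ≤ (W.x₀ : ℤ) + W.m i := by
  rw [← (W.colTgt_of_le le_rfl i).1]
  positivity

theorem colTgt_image_compl :
    W.colTgt '' {c | c.1 < W.x₀}ᶜ = {c | c.1 < (W.x₀ + W.m c.2).toNat}ᶜ := by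
  ext c
  simp only [mem_image, mem_compl_iff, mem_ofPred_eq, not_lt]
  constructor
  · rintro ⟨⟨x, i⟩, hx, rfl⟩
    dsimp only at hx
    obtain ⟨h₁, h₂, -⟩ := W.colTgt_of_le hx i
    rw [h₂]
    omega
  · intro hc
    have hx : W.x₀ ≤ (c.1 - W.m c.2).toNat := by have := W.x₀_add_m_nonneg c.2; omega
    obtain ⟨h₁, h₂, -⟩ := W.colTgt_of_le hx c.2
    exact ⟨_, hx, Prod.ext (by have := W.x₀_add_m_nonneg c.2; omega) h₂⟩

theorem colTgt_image_subset :
    W.colTgt '' {c | c.1 < W.x₀} ⊆ {c | c.1 < (W.x₀ + W.m c.2).toNat} := by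
  rw [← compl_compl {c : ℕ × Fin n | c.1 < (W.x₀ + W.m c.2).toNat}, ← W.colTgt_image_compl,
    subset_compl_iff_disjoint_right, disjoint_image_iff W.colTgt_injective]
  exact disjoint_compl_right

theorem missingColumns_eq_diff : missingColumns α =
    {c | c.1 < (W.x₀ + W.m c.2).toNat} \ W.colTgt '' {c | c.1 < W.x₀} := by
  rw [W.missingColumns_eq, ← image_univ, ← union_compl_self {c : ℕ × Fin n | c.1 < W.x₀},
    image_union, W.colTgt_image_compl, compl_union, compl_compl, inter_comm, sdiff_eq]

theorem finite_missingColumns (W : MData α) : (missingColumns α).Finite := by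
  rw [W.missingColumns_eq_diff]
  exact (finite_setOf_fst_lt fun i => (W.x₀ + W.m i).toNat).sdiff

/-- The columns left of `x₀ + mᵢ` in the quadrants `i` are the missing ones and the images of the
columns left of `x₀`. -/
theorem gr_eq_sum_m : (gr α : ℤ) = ∑ i, W.m i := by
  have h := ncard_sdiff_add_ncard_of_subset W.colTgt_image_subset
    (finite_setOf_fst_lt fun i => (W.x₀ + W.m i).toNat)
  rw [← W.missingColumns_eq_diff, ncard_image_of_injective _ W.colTgt_injective,
    ncard_setOf_fst_lt (fun _ => W.x₀), ncard_setOf_fst_lt fun i => (W.x₀ + W.m i).toNat,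
    ← gr_eq_ncard] at h
  have hsum : ((∑ i, (W.x₀ + W.m i).toNat : ℕ) : ℤ) = ∑ i, ((W.x₀ : ℤ) + W.m i) := by
    push_cast
    exact Finset.sum_congr rfl fun i _ => Int.toNat_of_nonneg (W.x₀_add_m_nonneg i)
  rw [← h, Finset.sum_add_distrib] at hsum
  push_cast at hsum
  linarith

theorem ncard_missingColumns_transpose (W : MData α) :
    (missingColumns (QSet.transpose α)).ncard = (missingColumns α).ncard := by
  have h₁ := W.gr_eq_sum_m
  have h₂ := W.transpose.gr_eq_sum_m
  rw [gr_eq_ncard] at h₁ h₂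
  exact_mod_cast h₂.trans h₁.symm

theorem exists_isThreshold (W : MData α) : ∃ N, IsThreshold α N := by
  obtain ⟨N, hN⟩ := W.exists_mem_range_iff
  obtain ⟨B, hB⟩ := (W.finite_missingColumns.image Prod.fst).bddAbove
  refine ⟨max N (B + 1), fun x y i hy => ?_, fun c hc => ?_⟩
  · rw [hN x y i ((le_max_left _ _).trans hy), W.missingColumns_eq, notMem_compl_iff]
  · have := hB (mem_image_of_mem _ hc)
    omega

theorem gr_add_sum_le {β : QSet n → QSet n} (W : MData α) (W' : MData β)
    {v : Fin n → ℕ} (h : ∀ s, α (translMap v s) = β s) : gr α + ∑ i, v i ≤ gr β := by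
  have hsub : missingColumns α ∪ W.colTgt '' {c | c.1 < v c.2} ⊆ missingColumns β := by
    rintro _ (⟨N, hN⟩ | ⟨c, hc, rfl⟩)
    · exact ⟨N, fun y hy ⟨s, hs⟩ => hN y hy ⟨translMap v s, (h s).trans hs⟩⟩
    · refine ⟨(W.y₀ + W.colShift c).toNat, fun y hy ⟨s, hs⟩ => ?_⟩
      have hpt := W.apply_col c (y := (y - W.colShift c).toNat) (by omega)
      rw [show ((y - W.colShift c).toNat + W.colShift c).toNat = y by omega] at hpt
      rw [← h s, ← hpt] at hs
      have := mem_range_translMap.1 ⟨s, W.inj hs⟩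
      exact absurd this.1 (not_le.2 hc)
  have hdisj : Disjoint (missingColumns α) (W.colTgt '' {c | c.1 < v c.2}) := by
    rw [W.missingColumns_eq]
    exact disjoint_compl_left.mono_right (image_subset_range _ _)
  calc gr α + ∑ i, v i = (missingColumns α ∪ W.colTgt '' {c | c.1 < v c.2}).ncard := by
        rw [ncard_union_eq hdisj W.finite_missingColumns ((finite_setOf_fst_lt v).image _),
          ncard_image_of_injective _ W.colTgt_injective, ncard_setOf_fst_lt, gr_eq_ncard]
    _ ≤ gr β := by
        rw [gr_eq_ncard]
        exact ncard_le_ncard hsub W'.finite_missingColumns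

end MData

theorem Mlt.gr_lt {a b : MMon n} (h : Mlt a b) : gr a.1 < gr b.1 := by
  obtain ⟨⟨v, hv⟩, hne⟩ := h
  obtain ⟨W⟩ := a.2.nonempty_mData
  obtain ⟨W'⟩ := b.2.nonempty_mData
  have hv₀ : ∑ i, v i ≠ 0 := by
    intro h₀
    obtain rfl : v = 0 := funext fun i => Finset.sum_eq_zero_iff.1 h₀ i (Finset.mem_univ i)
    exact hne (Subtype.ext (funext hv))
  have := W.gr_add_sum_le W' hv
  omega

theorem StrictMono.apply_zero_add_le {p : ℕ} {f : Fin (p + 1) → ℕ} (hf : StrictMono f)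
    (j : Fin (p + 1)) : f 0 + j ≤ f j := by
  induction j using Fin.induction with
  | zero => simp
  | succ i ih =>
    have := hf (Fin.castSucc_lt_succ (i := i))
    simp only [Fin.val_succ, Fin.val_castSucc] at *
    omega

theorem IsSimplexNK.le_sub {k p : ℕ} {α : Fin (p + 1) → MMon n} (h : IsSimplexNK n k p α) :
    p ≤ k - n := by
  have hmono : StrictMono fun j => gr (α j).1 := fun i j hij => (h.1 i j hij).gr_lt
  have := hmono.apply_zero_add_le (Fin.last p)
  have h₀ := (h.2 0).1
  have hp := (h.2 (Fin.last p)).2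
  simp only [Fin.val_last] at this
  omega

section Gluing

variable {α β : QSet n → QSet n}

open Classical in
/-- The permutation of `S` which is `α ∘ β⁻¹` on the image of `β` and `E` on its complement. -/
noncomputable def glue (hα : Injective α) (hβ : Injective β)
    (E : {q // q ∉ range β} ≃ {q // q ∉ range α}) : Equiv.Perm (QSet n) :=
  ((Equiv.ofInjective β hβ).symm.trans (Equiv.ofInjective α hα)).subtypeCongr E

variable (hα : Injective α) (hβ : Injective β) (E : {q // q ∉ range β} ≃ {q // q ∉ range α})

theorem glue_apply_apply (s : QSet n) : glue hα hβ E (β s) = α s := by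
  simp [glue, Equiv.subtypeCongr, Equiv.sumCompl]

theorem glue_apply_of_notMem {q : QSet n} (hq : q ∉ range β) : glue hα hβ E q = E ⟨q, hq⟩ := by
  simp [glue, Equiv.subtypeCongr, Equiv.sumCompl, hq]

end Gluing

section Rays

variable {β : QSet n → QSet n} {N d : ℕ}

def complRay (N : ℕ) (eV : Fin d ≃ missingColumns β)
    (eH : Fin d ≃ missingColumns (QSet.transpose β)) : (Fin d ⊕ Fin d) × ℕ → QSet n
  | (.inl x, j) => (((eV x).1.1, N + j), (eV x).1.2)
  | (.inr y, j) => ((N + j, (eH y).1.1), (eH y).1.2)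

variable (eV : Fin d ≃ missingColumns β) (eH : Fin d ≃ missingColumns (QSet.transpose β))

theorem complRay_notMem_range (hN : IsThreshold β N) (hN' : IsThreshold (QSet.transpose β) N)
    (k : (Fin d ⊕ Fin d) × ℕ) : complRay N eV eH k ∉ range β := by
  obtain ⟨x | y, j⟩ := k
  · exact fun h => (hN.1 _ _ _ (Nat.le_add_right N j)).1 h (eV x).2
  · exact fun h => (hN'.1 _ _ _ (Nat.le_add_right N j)).1 (mem_range_transpose.2 h) (eH y).2

theorem complRay_injective (hN : IsThreshold β N) :
    Injective (complRay N eV eH) := by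
  rintro ⟨x | y, j⟩ ⟨x' | y', j'⟩ h <;> simp only [complRay, Prod.mk.injEq] at h
  · obtain ⟨⟨h₁, h₂⟩, h₃⟩ := h
    obtain rfl := eV.injective (Subtype.ext (Prod.ext h₁ h₃))
    obtain rfl : j = j' := by omega
    rfl
  · have := hN.2 _ (eV x).2
    omega
  · have := hN.2 _ (eV x').2
    omega
  · obtain ⟨⟨h₁, h₂⟩, h₃⟩ := h
    obtain rfl := eH.injective (Subtype.ext (Prod.ext h₂ h₃))
    obtain rfl : j = j' := by omega
    rfl

theorem mem_range_complRay (hN : IsThreshold β N) (hN' : IsThreshold (QSet.transpose β) N)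
    {q : QSet n} (hq : q ∉ range β) (h : N ≤ q.1.2 ∨ N ≤ q.1.1) :
    q ∈ range (complRay N eV eH) := by
  obtain ⟨⟨x, y⟩, i⟩ := q
  rcases h with h | h
  · dsimp only at h
    have hc : (x, i) ∈ missingColumns β := by
      by_contra hc
      exact hq ((hN.1 x y i h).2 hc)
    refine ⟨(.inl (eV.symm ⟨_, hc⟩), y - N), ?_⟩
    simp only [complRay, Equiv.apply_symm_apply]
    congr
    omega
  · dsimp only at h
    have hc : (y, i) ∈ missingColumns (QSet.transpose β) := by
      by_contra hc
      exact hq (mem_range_transpose.1 ((hN'.1 y x i h).2 hc))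
    refine ⟨(.inr (eH.symm ⟨_, hc⟩), x - N), ?_⟩
    simp only [complRay, Equiv.apply_symm_apply]
    congr
    omega

theorem finite_compl_range_complRay (hN : IsThreshold β N)
    (hN' : IsThreshold (QSet.transpose β) N) :
    (range fun k => (⟨complRay N eV eH k, complRay_notMem_range eV eH hN hN' k⟩ :
      {q // q ∉ range β}))ᶜ.Finite := by
  refine ((finite_setOf_fst_lt_snd_lt N N).preimage Subtype.val_injective.injOn).subset
    fun q hq => ?_
  by_contra h
  simp only [mem_preimage, mem_ofPred_eq, not_and_or, not_lt] at h
  obtain ⟨k, hk⟩ := mem_range_complRay eV eH hN hN' q.2 h.symm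
  exact hq ⟨k, Subtype.ext hk⟩

theorem shiftsColumns_of_map_complRay {α : QSet n → QSet n} (eV₂ : Fin d ≃ missingColumns α)
    (eH₂ : Fin d ≃ missingColumns (QSet.transpose α)) {g : QSet n → QSet n} {a : ℕ}
    (h : ∀ k, ∃ b, ∀ j, g (complRay N eV eH (k, j + a)) = complRay N eV₂ eH₂ (k, j + b)) :
    ShiftsColumns g (missingColumns β) (N + a) ∧
      ShiftsColumns (QSet.transpose g) (missingColumns (QSet.transpose β)) (N + a) := by
  refine ⟨fun c hc => ?_, fun c hc => ?_⟩
  · obtain ⟨x, rfl⟩ : ∃ x, (eV x).1 = c := ⟨eV.symm ⟨c, hc⟩, by simp⟩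
    obtain ⟨b, hb⟩ := h (.inl x)
    refine ⟨(b : ℤ) - a, (eV₂ x).1.1, (eV₂ x).1.2, fun y hy => ?_⟩
    have hpt : (((eV x).1.1, y), (eV x).1.2) = complRay N eV eH (.inl x, y - N - a + a) := by
      simp only [complRay]
      congr
      omega
    rw [hpt, hb]
    exact ⟨rfl, rfl, by simp only [complRay]; push_cast; omega⟩
  · obtain ⟨y, rfl⟩ : ∃ y, (eH y).1 = c := ⟨eH.symm ⟨c, hc⟩, by simp⟩
    obtain ⟨b, hb⟩ := h (.inr y)
    refine ⟨(b : ℤ) - a, (eH₂ y).1.1, (eH₂ y).1.2, fun x hx => ?_⟩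
    have hpt : ((x, (eH y).1.1), (eH y).1.2) = complRay N eV eH (.inr y, x - N - a + a) := by
      simp only [complRay]
      congr
      omega
    simp only [QSet.transpose, QSet.swap]
    rw [hpt, hb]
    exact ⟨rfl, rfl, by simp only [complRay]; push_cast; omega⟩

end Rays

theorem mcond_of_shiftsColumns {g : QSet n → QSet n} (hinj : Injective g)
    (hdiag : ∃ (x₀ y₀ : ℕ) (m : Fin n → ℤ), ∀ (x y : ℕ) (i : Fin n), x₀ ≤ x → y₀ ≤ y →
      (g ((x, y), i)).2 = i ∧ ((g ((x, y), i)).1.1 : ℤ) = x + m i ∧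
        ((g ((x, y), i)).1.2 : ℤ) = y + m i)
    (hcol : ∃ y₀, ShiftsColumns g univ y₀) (hrow : ∃ x₀, ShiftsColumns (QSet.transpose g) univ x₀) :
    MCond g := by
  obtain ⟨x₀, y₀, m, hd⟩ := hdiag
  obtain ⟨y₁, hc⟩ := hcol
  obtain ⟨x₁, hr⟩ := hrow
  exact ⟨hinj, max x₀ x₁, max y₀ y₁, m,
    fun x y i hx hy => hd x y i (le_of_max_le_left hx) (le_of_max_le_left hy),
    fun x i => hc.mono (le_max_right _ _) (x, i) trivial,
    fun y i => hr.mono (le_max_right _ _) (y, i) trivial⟩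

namespace MData

variable {α β : QSet n → QSet n}

theorem exists_diag_of_comp (W : MData α) (W' : MData β) {g : QSet n → QSet n} (hg : ∀ s, g (β s) = α s) :
    ∃ (x₀ y₀ : ℕ) (m : Fin n → ℤ), ∀ (x y : ℕ) (i : Fin n), x₀ ≤ x → y₀ ≤ y →
      (g ((x, y), i)).2 = i ∧ ((g ((x, y), i)).1.1 : ℤ) = x + m i ∧
        ((g ((x, y), i)).1.2 : ℤ) = y + m i := by
  obtain ⟨M, hM⟩ := (finite_range W'.m).bddAbove
  set x₀ := W.x₀ + W'.x₀ + W.y₀ + W'.y₀ + M.toNat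
  refine ⟨x₀, x₀, fun i => W.m i - W'.m i, fun x y i hx hy => ?_⟩
  have hMi : W'.m i ≤ M := hM ⟨i, rfl⟩
  have hs : β (((x - W'.m i).toNat, (y - W'.m i).toNat), i) = ((x, y), i) := by
    obtain ⟨h₁, h₂, h₃⟩ := W'.diag ((x - W'.m i).toNat) ((y - W'.m i).toNat) i (by omega)
      (by omega)
    refine Prod.ext (Prod.ext ?_ ?_) h₁ <;> dsimp only <;> omega
  obtain ⟨h₁, h₂, h₃⟩ := W.diag ((x - W'.m i).toNat) ((y - W'.m i).toNat) i (by omega) (by omega)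
  rw [← hs, hg]
  exact ⟨h₁, by dsimp only; omega, by dsimp only; omega⟩

theorem exists_shiftsColumns_of_comp (W : MData α) (W' : MData β) {g : QSet n → QSet n} (hg : ∀ s, g (β s) = α s) {y₁ : ℕ}
    (h : ShiftsColumns g (missingColumns β) y₁) : ∃ y₀, ShiftsColumns g univ y₀ := by
  obtain ⟨Q, hQ⟩ := W'.exists_colShift_le
  refine ⟨y₁ + (W.y₀ + W'.y₀ + Q).toNat, fun c _ => ?_⟩
  by_cases hc : c ∈ missingColumns β
  · exact h.mono (Nat.le_add_right _ _) c hc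
  rw [W'.missingColumns_eq, notMem_compl_iff] at hc
  obtain ⟨c', rfl⟩ := hc
  refine ⟨W.colShift c' - W'.colShift c', (W.colTgt c').1, (W.colTgt c').2, fun y hy => ?_⟩
  have hQc := hQ c'
  have hβ := W'.apply_col c' (y := (y - W'.colShift c').toNat) (by omega)
  rw [show ((y - W'.colShift c').toNat + W'.colShift c').toNat = y by omega] at hβ
  obtain ⟨h₁, h₂, h₃⟩ := W.col c' ((y - W'.colShift c').toNat) (by omega)
  rw [← hβ, hg]
  exact ⟨h₁, h₂, by omega⟩

theorem nonempty_equiv_missingColumns (W : MData α) {d : ℕ} (hd : gr α = d) :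
    Nonempty (Fin d ≃ missingColumns α) ∧ Nonempty (Fin d ≃ missingColumns (QSet.transpose α)) := by
  have := W.finite_missingColumns.to_subtype
  have := W.transpose.finite_missingColumns.to_subtype
  rw [gr_eq_ncard] at hd
  exact ⟨⟨(Finite.equivFinOfCardEq (by rwa [Nat.card_coe_set_eq])).symm⟩,
    ⟨(Finite.equivFinOfCardEq (by rwa [Nat.card_coe_set_eq, W.ncard_missingColumns_transpose])).symm⟩⟩

end MData

/-- The complements of the images of `α` and `β` both consist of `gr β` column rays, `gr β` row
rays and a finite set; Hilbert's hotel matches them up to shifts along the rays. -/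
theorem MData.exists_perm_comp_eq {α β : QSet n → QSet n} (W : MData α) (W' : MData β)
    (hgr : gr α = gr β) (hpos : 0 < gr β) :
    ∃ g : Equiv.Perm (QSet n), (∀ s, g (β s) = α s) ∧ ∃ y₁,
      ShiftsColumns g (missingColumns β) y₁ ∧
        ShiftsColumns (QSet.transpose g) (missingColumns (QSet.transpose β)) y₁ := by
  obtain ⟨N, hα, hα', hβ, hβ'⟩ : ∃ N, IsThreshold α N ∧ IsThreshold (QSet.transpose α) N ∧
      IsThreshold β N ∧ IsThreshold (QSet.transpose β) N := by
    obtain ⟨N₁, h₁⟩ := W.exists_isThreshold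
    obtain ⟨N₂, h₂⟩ := W.transpose.exists_isThreshold
    obtain ⟨N₃, h₃⟩ := W'.exists_isThreshold
    obtain ⟨N₄, h₄⟩ := W'.transpose.exists_isThreshold
    exact ⟨N₁ + N₂ + N₃ + N₄, h₁.mono (by omega), h₂.mono (by omega), h₃.mono (by omega),
      h₄.mono (by omega)⟩
  obtain ⟨⟨eV⟩, ⟨eH⟩⟩ := W.nonempty_equiv_missingColumns hgr
  obtain ⟨⟨eV'⟩, ⟨eH'⟩⟩ := W'.nonempty_equiv_missingColumns rfl
  obtain ⟨E, a, hE⟩ := exists_equiv_eventually_shift (.inl ⟨0, hpos⟩)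
    (fun k k' h => complRay_injective eV' eH' hβ (congrArg Subtype.val h))
    (fun k k' h => complRay_injective eV eH hα (congrArg Subtype.val h))
    (finite_compl_range_complRay eV' eH' hβ hβ') (finite_compl_range_complRay eV eH hα hα')
  set g := glue W.inj W'.inj E
  have key : ∀ k, ∃ b, ∀ j, g (complRay N eV' eH' (k, j + a)) = complRay N eV eH (k, j + b) :=
    fun k => let ⟨b, hb⟩ := hE k
    ⟨b, fun j => by
      rw [glue_apply_of_notMem _ _ _ (complRay_notMem_range eV' eH' hβ hβ' _)]
      exact congrArg Subtype.val (hb j)⟩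
  exact ⟨g, glue_apply_apply _ _ _, N + a, shiftsColumns_of_map_complRay eV' eH' eV eH key⟩

theorem MCond.exists_bijective_comp_eq {α β : QSet n → QSet n} (hα : MCond α) (hβ : MCond β)
    (hgr : gr α = gr β) (hpos : 0 < gr β) :
    ∃ g : QSet n → QSet n, MCond g ∧ Bijective g ∧ ∀ s, g (β s) = α s := by
  obtain ⟨W⟩ := hα.nonempty_mData
  obtain ⟨W'⟩ := hβ.nonempty_mData
  obtain ⟨g, hg, y₁, hcol, hrow⟩ := W.exists_perm_comp_eq W' hgr hpos
  have hg' : ∀ s, QSet.transpose g (QSet.transpose β s) = QSet.transpose α s := fun s => by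
    simp [QSet.transpose, hg]
  exact ⟨g, mcond_of_shiftsColumns g.injective (W.exists_diag_of_comp W' hg)
    (W.exists_shiftsColumns_of_comp W' hg hcol)
    (W.transpose.exists_shiftsColumns_of_comp W'.transpose hg' hrow), g.bijective, hg⟩

def MMon.transl (v : Fin n → ℕ) : MMon n := ⟨translMap v, mcond_translMap v⟩

theorem Mle.of_comp {g : QSet n → QSet n} (hg : Injective g) {a b a' b' : MMon n}
    (ha : ∀ s, g (a'.1 s) = a.1 s) (hb : ∀ s, g (b'.1 s) = b.1 s) (h : Mle a b) : Mle a' b' :=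
  let ⟨w, hw⟩ := h
  ⟨w, fun s => hg (by rw [ha, hb, hw])⟩

theorem Mlt.of_comp {g : QSet n → QSet n} (hg : Injective g) {a b a' b' : MMon n}
    (ha : ∀ s, g (a'.1 s) = a.1 s) (hb : ∀ s, g (b'.1 s) = b.1 s) (h : Mlt a b) : Mlt a' b' :=
  ⟨h.1.of_comp hg ha hb, fun e => h.2 (Subtype.ext (funext fun s => by rw [← ha, ← hb, e]))⟩

theorem IsSimplexNK.exists_translations {k p : ℕ} {α : Fin (p + 1) → MMon n}
    (hα : IsSimplexNK n k p α) :
    ∃ u : Fin (p + 1) → Fin n → ℕ, (∀ j i, u j i ≤ k) ∧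
      IsSimplexNK n k p (fun j => MMon.transl (u j)) ∧
        ∃ g : QSet n → QSet n, MCond g ∧ Bijective g ∧ ∀ j s, g (translMap (u j) s) = (α j).1 s := by
  obtain rfl | hn := n.eq_zero_or_pos
  · have : Subsingleton (MMon 0) := ⟨fun a b => Subtype.ext (funext fun s => s.2.elim0)⟩
    exact ⟨0, fun _ i => i.elim0, Subsingleton.elim α (fun _ => MMon.transl 0) ▸ hα, translMap 0, mcond_translMap 0,
      translMap_zero ▸ bijective_id, fun _ s => s.2.elim0⟩
  set d := gr (α 0).1
  have hd : n ≤ d := (hα.2 0).1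
  set u₀ : Fin n → ℕ := Pi.single ⟨0, hn⟩ d
  have hu₀ : gr (translMap u₀) = d := by simp [gr_translMap, u₀]
  obtain ⟨g, hg, hgbij, hgα⟩ :=
    (α 0).2.exists_bijective_comp_eq (mcond_translMap u₀) hu₀.symm (by omega)
  have hle : ∀ j, Mle (α 0) (α j) := fun j =>
    (Fin.zero_le j).eq_or_lt.elim (fun h => h ▸ ⟨0, fun _ => rfl⟩) fun h => (hα.1 0 j h).1
  choose v hv using hle
  have hcomp : ∀ j s, g (translMap (u₀ + v j) s) = (α j).1 s := fun j s => by
    rw [← translMap_translMap, hgα, hv]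
  have hsum : ∀ j, ∑ i, (u₀ + v j) i = d + ∑ i, v j i := fun j => by
    simp [Finset.sum_add_distrib, u₀]
  have hgr : ∀ j, d + ∑ i, v j i ≤ gr (α j).1 := fun j => by
    obtain ⟨W₀⟩ := (α 0).2.nonempty_mData
    obtain ⟨W⟩ := (α j).2.nonempty_mData
    exact W₀.gr_add_sum_le W (hv j)
  refine ⟨fun j => u₀ + v j, fun j i => ?_, ⟨fun i j hij => (hα.1 i j hij).of_comp hgbij.injective
    (hcomp i) (hcomp j), fun j => ?_⟩, g, hg, hgbij, hcomp⟩
  · calc (u₀ + v j) i ≤ ∑ i, (u₀ + v j) i := Finset.single_le_sum (by simp) (Finset.mem_univ i)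
      _ ≤ k := by rw [hsum]; exact (hgr j).trans (hα.2 j).2
  · simp only [MMon.transl, gr_translMap, hsum]
    exact ⟨hd.trans (Nat.le_add_right _ _), (hgr j).trans (hα.2 j).2⟩

/-- `|M^{[n,k]}|` is finite mod `Gₙ`: the dimension of `|Mⁿ|` restricted to
`M^{[n,k]}` is bounded (by `k − n`), and for each `p` there are finitely many `Gₙ`-orbits of
`p`-simplices, i.e. a finite set of representatives. -/
theorem stmt_14 (n k : ℕ) :
    (∀ p (α : Fin (p + 1) → MMon n), IsSimplexNK n k p α → p ≤ k - n) ∧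
    ∀ p : ℕ, ∃ R : Set (Fin (p + 1) → MMon n), R.Finite ∧
      (∀ β ∈ R, IsSimplexNK n k p β) ∧
      ∀ α : Fin (p + 1) → MMon n, IsSimplexNK n k p α →
        ∃ β ∈ R, ∃ g : QSet n → QSet n, MCond g ∧ Function.Bijective g ∧
          ∀ j s, g ((β j).1 s) = (α j).1 s := by
  refine ⟨fun p α hα => hα.le_sub, fun p => ?_⟩
  set T : (Fin (p + 1) → Fin n → ℕ) → Fin (p + 1) → MMon n := fun u j => MMon.transl (u j)
  refine ⟨T '' {u | (∀ j i, u j i ≤ k) ∧ IsSimplexNK n k p (T u)}, ?_, ?_, fun α hα => ?_⟩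
  · exact ((finite_Icc 0 fun _ _ => k).subset fun u hu => ⟨fun _ _ => Nat.zero_le _, hu.1⟩).image T
  · rintro _ ⟨u, hu, rfl⟩
    exact hu.2
  · obtain ⟨u, hu, hsimp, hg⟩ := hα.exists_translations
    exact ⟨T u, ⟨u, ⟨hu, hsimp⟩, rfl⟩, hg⟩
end

section
/- The map φ : G̃ₙ → ℤⁿ sending g (with eventual translation vectors (m_{i1}, m_{i2}) ∈ ℤ² on quadrant i) to (m_{11}−m_{12}, …, m_{n1}−m_{n2}) is a group homomorphism whose image is isomorphic to ℤ^{n−1} (it lies in, and equals, the kernel of the summation map ℤⁿ → ℤ) and whose kernel is exactly Gₙ. Hence there is a short exact sequence 0 → Gₙ → G̃ₙ → ℤ^{n−1} → 0. -/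
/-- Condition `B̃₁` with explicit data: beyond `(x₀, y₀)`, the permutation `g` translates the
`i`-th quadrant by the vector `m i = (m_{i1}, m_{i2}) ∈ ℤ²`. -/
def EvVecFrom {n : ℕ} (g : QSet n → QSet n) (x₀ y₀ : ℕ) (m : Fin n → ℤ × ℤ) : Prop :=
  ∀ (x y : ℕ) (i : Fin n), x₀ ≤ x → y₀ ≤ y →
    (g ((x, y), i)).2 = i ∧
    ((g ((x, y), i)).1.1 : ℤ) = (x : ℤ) + (m i).1 ∧
    ((g ((x, y), i)).1.2 : ℤ) = (y : ℤ) + (m i).2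

/-- `g` eventually translates the `i`-th quadrant by the vector `m i` (condition `B̃₁`). -/
def EvVec {n : ℕ} (g : QSet n → QSet n) (m : Fin n → ℤ × ℤ) : Prop :=
  ∃ x₀ y₀ : ℕ, EvVecFrom g x₀ y₀ m

/-- Membership in the group `G̃ₙ`: `g` is a permutation of `S` satisfying `B̃₁`
(eventually a translation with an arbitrary integral vector on each quadrant) and the
half-line conditions `B₂(a)`, `B₂(b)`. -/
def GTilde {n : ℕ} (g : QSet n → QSet n) : Prop :=
  Function.Bijective g ∧
  ∃ (x₀ y₀ : ℕ) (m : Fin n → ℤ × ℤ),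
    EvVecFrom g x₀ y₀ m ∧
    (∀ (x : ℕ) (i : Fin n), ∃ (q : ℤ) (x' : ℕ) (i' : Fin n),
      ∀ y : ℕ, y₀ ≤ y →
        (g ((x, y), i)).1.1 = x' ∧ (g ((x, y), i)).2 = i' ∧
        ((g ((x, y), i)).1.2 : ℤ) = (y : ℤ) + q) ∧
    (∀ (y : ℕ) (i : Fin n), ∃ (r : ℤ) (y' : ℕ) (i' : Fin n),
      ∀ x : ℕ, x₀ ≤ x →
        (g ((x, y), i)).1.2 = y' ∧ (g ((x, y), i)).2 = i' ∧
        ((g ((x, y), i)).1.1 : ℤ) = (x : ℤ) + r)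

/-- Membership in the subgroup `Gₙ ⊆ G̃ₙ`: the two components of each eventual translation
vector agree (diagonal translations). -/
def GDiag {n : ℕ} (g : QSet n → QSet n) : Prop :=
  GTilde g ∧ ∃ m : Fin n → ℤ, EvVec g (fun i => (m i, m i))

lemma evvec_unique {n : ℕ} (g : QSet n → QSet n)
    (m m' : Fin n → ℤ × ℤ) (h : EvVec g m) (h' : EvVec g m') : m = m' := by
  obtain ⟨x₀, y₀, h⟩ := h
  obtain ⟨x₁, y₁, h'⟩ := h'
  funext i
  obtain ⟨-, e1, e2⟩ := h (max x₀ x₁) (max y₀ y₁) i (le_max_left _ _) (le_max_left _ _)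
  obtain ⟨-, e1', e2'⟩ := h' (max x₀ x₁) (max y₀ y₁) i (le_max_right _ _) (le_max_right _ _)
  have := e1.symm.trans e1'
  have := e2.symm.trans e2'
  exact Prod.ext (by omega) (by omega)

lemma evvec_comp {n : ℕ} (g h : QSet n → QSet n) (mg mh : Fin n → ℤ × ℤ)
    (hg : EvVec g mg) (hh : EvVec h mh) : EvVec (fun s => h (g s)) (mg + mh) := by
  obtain ⟨x₀, y₀, hg⟩ := hg
  obtain ⟨x₁, y₁, hh⟩ := hh
  refine ⟨x₀ + x₁ + ∑ i, (mg i).1.natAbs, y₀ + y₁ + ∑ i, (mg i).2.natAbs, ?_⟩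
  intro x y i hx hy
  have hb1 : (mg i).1.natAbs ≤ ∑ j, (mg j).1.natAbs :=
    Finset.single_le_sum (f := fun j => (mg j).1.natAbs) (fun j _ => Nat.zero_le _)
      (Finset.mem_univ i)
  have hb2 : (mg i).2.natAbs ≤ ∑ j, (mg j).2.natAbs :=
    Finset.single_le_sum (f := fun j => (mg j).2.natAbs) (fun j _ => Nat.zero_le _)
      (Finset.mem_univ i)
  obtain ⟨e0, e1, e2⟩ := hg x y i (by omega) (by omega)
  set p := g ((x, y), i) with hp
  have hxx : x₁ ≤ p.1.1 := by omega
  have hyy : y₁ ≤ p.1.2 := by omega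
  obtain ⟨f0, f1, f2⟩ := hh p.1.1 p.1.2 i hxx hyy
  have hpe : ((p.1.1, p.1.2), i) = p := Prod.ext rfl e0.symm
  rw [hpe] at f0 f1 f2
  refine ⟨f0, ?_, ?_⟩
  · show ((h p).1.1 : ℤ) = (x : ℤ) + ((mg + mh) i).1
    simp only [Pi.add_apply, Prod.fst_add]; omega
  · show ((h p).1.2 : ℤ) = (y : ℤ) + ((mg + mh) i).2
    simp only [Pi.add_apply, Prod.snd_add]; omega

lemma sum_fst_eq_zero {n : ℕ} (g : QSet n → QSet n) (hg : Function.Bijective g)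
    (x₀ y₀ : ℕ) (m : Fin n → ℤ × ℤ)
    (hm : EvVecFrom g x₀ y₀ m)
    (hA : ∀ (x : ℕ) (i : Fin n), ∃ (q : ℤ) (x' : ℕ) (i' : Fin n),
      ∀ y : ℕ, y₀ ≤ y →
        (g ((x, y), i)).1.1 = x' ∧ (g ((x, y), i)).2 = i' ∧
        ((g ((x, y), i)).1.2 : ℤ) = (y : ℤ) + q)
    (hB : ∀ (y : ℕ) (i : Fin n), ∃ (r : ℤ) (y' : ℕ) (i' : Fin n),
      ∀ x : ℕ, x₀ ≤ x →
        (g ((x, y), i)).1.2 = y' ∧ (g ((x, y), i)).2 = i' ∧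
        ((g ((x, y), i)).1.1 : ℤ) = (x : ℤ) + r) :
    ∑ i : Fin n, (m i).1 = 0 := by
  classical
  obtain ⟨q, X, I, hA⟩ : ∃ (q : ℕ → Fin n → ℤ) (X : ℕ → Fin n → ℕ) (I : ℕ → Fin n → Fin n),
      ∀ (x : ℕ) (i : Fin n) (y : ℕ), y₀ ≤ y →
        (g ((x, y), i)).1.1 = X x i ∧ (g ((x, y), i)).2 = I x i ∧
        ((g ((x, y), i)).1.2 : ℤ) = (y : ℤ) + q x i := by
    choose q X I h using hA
    exact ⟨q, X, I, h⟩
  obtain ⟨Y, hBY⟩ : ∃ (Y : ℕ → Fin n → ℕ),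
      ∀ (y : ℕ) (i : Fin n) (x : ℕ), x₀ ≤ x → (g ((x, y), i)).1.2 = Y y i := by
    choose r Y J h using hB
    exact ⟨Y, fun y i x hx => (h y i x hx).1⟩
  have hmnn : ∀ j : Fin n, 0 ≤ (x₀ : ℤ) + (m j).1 := by
    intro j
    have := (hm x₀ y₀ j le_rfl le_rfl).2.1
    omega
  set t : Fin n → ℕ := fun j => ((x₀ : ℤ) + (m j).1).toNat with ht
  have htc : ∀ j, (t j : ℤ) = (x₀ : ℤ) + (m j).1 := fun j => Int.toNat_of_nonneg (hmnn j)
  have col_inj : ∀ (x : ℕ) (i : Fin n) (x' : ℕ) (i' : Fin n),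
      X x i = X x' i' → I x i = I x' i' → x = x' ∧ i = i' := by
    intro x i x' i' hX hI
    set y : ℕ := y₀ + (q x' i' - q x i).toNat with hy
    set y' : ℕ := y₀ + (q x i - q x' i').toNat with hy'
    obtain ⟨a1, a2, a3⟩ := hA x i y (Nat.le_add_right _ _)
    obtain ⟨b1, b2, b3⟩ := hA x' i' y' (Nat.le_add_right _ _)
    have hyq : ((g ((x, y), i)).1.2 : ℤ) = ((g ((x', y'), i')).1.2 : ℤ) := by
      rw [a3, b3, hy, hy']; push_cast; omega
    have hgeq : g ((x, y), i) = g ((x', y'), i') := by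
      refine Prod.ext (Prod.ext ?_ ?_) ?_
      · rw [a1, b1, hX]
      · exact_mod_cast hyq
      · rw [a2, b2, hI]
    have := hg.1 hgeq
    simp only [Prod.mk.injEq] at this
    exact ⟨this.1.1, this.2⟩
  have far : ∀ (x : ℕ) (j : Fin n), x₀ ≤ x →
      (X x j : ℤ) = (x : ℤ) + (m j).1 ∧ I x j = j := by
    intro x j hx
    obtain ⟨a1, a2, a3⟩ := hA x j y₀ le_rfl
    obtain ⟨e0, e1, e2⟩ := hm x y₀ j hx le_rfl
    exact ⟨by rw [← a1]; exact e1, a2.symm.trans e0⟩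
  have near_small : ∀ (x : ℕ) (i : Fin n), x < x₀ → X x i < t (I x i) := by
    intro x i hx
    by_contra hcon
    push_neg at hcon
    set j := I x i with hj
    set xb : ℕ := x₀ + (X x i - t j) with hxb
    have hxbc : (xb : ℤ) = (x₀ : ℤ) + (X x i : ℤ) - (t j : ℤ) := by
      rw [hxb]; push_cast; omega
    obtain ⟨fX, fI⟩ := far xb j (Nat.le_add_right _ _)
    have hXX : X xb j = X x i := by
      have h1 := htc j
      have : (X xb j : ℤ) = (X x i : ℤ) := by rw [fX]; omega
      exact_mod_cast this
    obtain ⟨hxe, -⟩ := col_inj xb j x i hXX fI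
    omega
  have near_surj : ∀ (u : ℕ) (j : Fin n), u < t j →
      ∃ (x : ℕ) (i : Fin n), x < x₀ ∧ X x i = u ∧ I x i = j := by
    intro u j hu
    set S1 : ℕ := (Finset.range y₀ ×ˢ (Finset.univ : Finset (Fin n))).sup
      (fun p => Y p.1 p.2) with hS1
    set S2 : ℕ := (Finset.range x₀ ×ˢ Finset.range y₀ ×ˢ (Finset.univ : Finset (Fin n))).sup
      (fun p => (g ((p.1, p.2.1), p.2.2)).1.2) with hS2
    set H : ℕ := 1 + S1 + S2 + y₀ with hH
    obtain ⟨⟨⟨x, y⟩, i⟩, hs⟩ := hg.2 ((u, H), j)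
    by_cases hx : x₀ ≤ x
    · by_cases hy : y₀ ≤ y
      · exfalso
        obtain ⟨e0, e1, e2⟩ := hm x y i hx hy
        rw [hs] at e0 e1
        simp only at e0 e1
        subst e0
        have := htc j
        omega
      · exfalso
        have b1 := hBY y i x hx
        rw [hs] at b1
        simp only at b1
        have hmem : (y, i) ∈ Finset.range y₀ ×ˢ (Finset.univ : Finset (Fin n)) := by
          simp [Finset.mem_product]; omega
        have hle : Y y i ≤ S1 := Finset.le_sup (f := fun p => Y p.1 p.2) hmem
        omega
    · by_cases hy : y₀ ≤ y
      · obtain ⟨a1, a2, a3⟩ := hA x i y hy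
        rw [hs] at a1 a2
        simp only at a1 a2
        exact ⟨x, i, by omega, a1.symm, a2.symm⟩
      · exfalso
        have hmem : (x, (y, i)) ∈
            Finset.range x₀ ×ˢ Finset.range y₀ ×ˢ (Finset.univ : Finset (Fin n)) := by
          simp [Finset.mem_product]; omega
        have hle : (g ((x, y), i)).1.2 ≤ S2 :=
          Finset.le_sup (f := fun p => (g ((p.1, p.2.1), p.2.2)).1.2) hmem
        rw [hs] at hle
        simp only at hle
        omega
  have hle1 : x₀ * n ≤ ∑ j, t j := by
    have hcard : Fintype.card (Fin x₀ × Fin n) ≤ Fintype.card (Σ j : Fin n, Fin (t j)) := by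
      apply Fintype.card_le_of_injective
        (fun p => ⟨I p.1.val p.2, ⟨X p.1.val p.2, near_small p.1.val p.2 p.1.isLt⟩⟩)
      intro p p' hpp
      have h1 : I p.1.val p.2 = I p'.1.val p'.2 := congrArg Sigma.fst hpp
      have h2 : X p.1.val p.2 = X p'.1.val p'.2 := by
        have := congrArg (fun s : (Σ j : Fin n, Fin (t j)) => (s.2 : ℕ)) hpp
        simpa using this
      obtain ⟨hx, hi⟩ := col_inj _ _ _ _ h2 h1
      exact Prod.ext (Fin.ext hx) hi
    simpa [Fintype.card_sigma, mul_comm] using hcard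
  have hle2 : ∑ j, t j ≤ x₀ * n := by
    choose xs is hlt hX hI using near_surj
    have hcard : Fintype.card (Σ j : Fin n, Fin (t j)) ≤ Fintype.card (Fin x₀ × Fin n) := by
      apply Fintype.card_le_of_injective
        (fun s => (⟨xs s.2.val s.1 s.2.isLt, hlt s.2.val s.1 s.2.isLt⟩, is s.2.val s.1 s.2.isLt))
      rintro ⟨j, u⟩ ⟨j', u'⟩ hss
      simp only [Prod.mk.injEq, Fin.mk.injEq] at hss
      have hXe : X (xs u.val j u.isLt) (is u.val j u.isLt)
          = X (xs u'.val j' u'.isLt) (is u'.val j' u'.isLt) := by rw [hss.1, hss.2]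
      have hIe : I (xs u.val j u.isLt) (is u.val j u.isLt)
          = I (xs u'.val j' u'.isLt) (is u'.val j' u'.isLt) := by rw [hss.1, hss.2]
      have hje : j = j' := by rw [← hI u.val j u.isLt, ← hI u'.val j' u'.isLt, hIe]
      subst hje
      have hue : u = u' := by
        apply Fin.ext
        rw [← hX u.val j u.isLt, ← hX u'.val j u'.isLt, hXe]
      rw [hue]
    simpa [Fintype.card_sigma, mul_comm] using hcard
  have hsum : ∑ j, t j = x₀ * n := le_antisymm hle2 hle1
  have hmt : ∀ j : Fin n, (m j).1 = (t j : ℤ) - (x₀ : ℤ) := by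
    intro j; have := htc j; omega
  calc ∑ i : Fin n, (m i).1 = ∑ i : Fin n, ((t i : ℤ) - (x₀ : ℤ)) :=
        Finset.sum_congr rfl (fun j _ => hmt j)
    _ = (∑ i : Fin n, (t i : ℤ)) - n * x₀ := by
        rw [Finset.sum_sub_distrib]; simp [Finset.card_univ, mul_comm]
    _ = 0 := by
        have h5 : (∑ i : Fin n, (t i : ℤ)) = ((∑ i, t i : ℕ) : ℤ) := by push_cast; ring
        rw [h5, hsum]; push_cast; ring

lemma sum_snd_eq_zero {n : ℕ} (g : QSet n → QSet n) (hg : Function.Bijective g)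
    (x₀ y₀ : ℕ) (m : Fin n → ℤ × ℤ)
    (hm : EvVecFrom g x₀ y₀ m)
    (hA : ∀ (x : ℕ) (i : Fin n), ∃ (q : ℤ) (x' : ℕ) (i' : Fin n),
      ∀ y : ℕ, y₀ ≤ y →
        (g ((x, y), i)).1.1 = x' ∧ (g ((x, y), i)).2 = i' ∧
        ((g ((x, y), i)).1.2 : ℤ) = (y : ℤ) + q)
    (hB : ∀ (y : ℕ) (i : Fin n), ∃ (r : ℤ) (y' : ℕ) (i' : Fin n),
      ∀ x : ℕ, x₀ ≤ x →
        (g ((x, y), i)).1.2 = y' ∧ (g ((x, y), i)).2 = i' ∧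
        ((g ((x, y), i)).1.1 : ℤ) = (x : ℤ) + r) :
    ∑ i : Fin n, (m i).2 = 0 := by
  set τ : QSet n → QSet n := fun p => ((p.1.2, p.1.1), p.2) with hτ
  have hτbij : Function.Bijective τ := Function.Involutive.bijective (fun p => rfl)
  have := sum_fst_eq_zero (fun p => τ (g (τ p))) ((hτbij.comp hg).comp hτbij)
    y₀ x₀ (fun i => ((m i).2, (m i).1))
    (fun x y i hx hy => by
      obtain ⟨e0, e1, e2⟩ := hm y x i hy hx
      exact ⟨e0, e2, e1⟩)
    (fun x i => by
      obtain ⟨r, y', i', h⟩ := hB x i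
      exact ⟨r, y', i', fun y hy => by
        obtain ⟨c1, c2, c3⟩ := h y hy
        exact ⟨c1, c2, c3⟩⟩)
    (fun y i => by
      obtain ⟨qq, x', i', h⟩ := hA y i
      exact ⟨qq, x', i', fun x hx => by
        obtain ⟨c1, c2, c3⟩ := h x hx
        exact ⟨c1, c2, c3⟩⟩)
  exact this

lemma exists_bij_shift {n : ℕ} (v : Fin n → ℤ) (hv : ∑ i, v i = 0) :
    ∃ (σ : ℕ × Fin n → ℕ × Fin n) (K : ℕ), Function.Bijective σ ∧
      ∀ (x : ℕ) (i : Fin n), K ≤ x →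
        (((σ (x, i)).1 : ℤ) = (x : ℤ) + v i ∧ (σ (x, i)).2 = i) := by
  classical
  set K : ℕ := ∑ i, (v i).natAbs with hK
  have hvK : ∀ i, (v i).natAbs ≤ K := fun i =>
    Finset.single_le_sum (f := fun j => (v j).natAbs) (fun j _ => Nat.zero_le _)
      (Finset.mem_univ i)
  set h : Fin n → ℕ := fun i => ((K : ℤ) + v i).toNat with hh
  have hhc : ∀ i, (h i : ℤ) = (K : ℤ) + v i := by
    intro i
    have h1 := hvK i
    simp only [hh]
    rw [Int.toNat_of_nonneg]
    omega
  set Sm : Finset (ℕ × Fin n) := Finset.range K ×ˢ Finset.univ with hSm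
  set Ho : Finset (ℕ × Fin n) :=
    Finset.univ.biUnion (fun i => (Finset.range (h i)).image (fun u => (u, i))) with hHo
  have hmemHo : ∀ p : ℕ × Fin n, p ∈ Ho ↔ p.1 < h p.2 := by
    intro p
    simp only [hHo, Finset.mem_biUnion, Finset.mem_image, Finset.mem_range, Finset.mem_univ,
      true_and]
    constructor
    · rintro ⟨i, u, hu, rfl⟩; exact hu
    · intro hp; exact ⟨p.2, p.1, hp, rfl⟩
  have hmemSm : ∀ p : ℕ × Fin n, p ∈ Sm ↔ p.1 < K := by
    intro p
    simp [hSm, Finset.mem_product]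
  have hcards : Sm.card = Ho.card := by
    have h1 : Sm.card = K * n := by
      simp [hSm, Finset.card_product]
    have h2 : Ho.card = ∑ i, h i := by
      rw [hHo, Finset.card_biUnion]
      · refine Finset.sum_congr rfl (fun i _ => ?_)
        rw [Finset.card_image_of_injective _ (fun a b hab => (Prod.mk.injEq _ _ _ _).mp hab |>.1),
          Finset.card_range]
      · intro i _ j _ hij
        simp only [Finset.disjoint_left, Finset.mem_image, Finset.mem_range]
        rintro p ⟨u, hu, rfl⟩ ⟨u', hu', huv⟩
        exact hij ((Prod.mk.injEq _ _ _ _).mp huv |>.2.symm)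
    have h3 : ((∑ i, h i : ℕ) : ℤ) = ((K * n : ℕ) : ℤ) := by
      calc ((∑ i, h i : ℕ) : ℤ) = ∑ i, ((h i : ℤ)) := by push_cast; ring
        _ = ∑ i, ((K : ℤ) + v i) := Finset.sum_congr rfl (fun i _ => hhc i)
        _ = n * K + ∑ i, v i := by rw [Finset.sum_add_distrib]; simp [mul_comm]
        _ = ((K * n : ℕ) : ℤ) := by rw [hv]; push_cast; ring
    have h4 : ∑ i, h i = K * n := by exact_mod_cast h3
    rw [h1, h2, h4]
  set e : {p // p ∈ Sm} ≃ {p // p ∈ Ho} := Finset.equivOfCardEq hcards with he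
  set σ : ℕ × Fin n → ℕ × Fin n := fun p =>
    if hp : p ∈ Sm then (e ⟨p, hp⟩ : ℕ × Fin n) else (p.1 - K + h p.2, p.2) with hσ
  set τ : ℕ × Fin n → ℕ × Fin n := fun p =>
    if hp : p ∈ Ho then (e.symm ⟨p, hp⟩ : ℕ × Fin n) else (p.1 - h p.2 + K, p.2) with hτ
  have hτσ : ∀ p, τ (σ p) = p := by
    intro p
    by_cases hp : p ∈ Sm
    · have h1 : σ p = (e ⟨p, hp⟩ : ℕ × Fin n) := by simp [hσ, hp]
      have h2 : (e ⟨p, hp⟩ : ℕ × Fin n) ∈ Ho := (e ⟨p, hp⟩).2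
      rw [h1]
      simp only [hτ]
      rw [dif_pos h2]
      have h3 : (⟨(e ⟨p, hp⟩ : ℕ × Fin n), h2⟩ : {p // p ∈ Ho}) = e ⟨p, hp⟩ := rfl
      rw [h3, Equiv.symm_apply_apply]
    · have hpK : ¬ p.1 < K := fun hlt => hp ((hmemSm p).mpr hlt)
      have h1 : σ p = (p.1 - K + h p.2, p.2) := by simp [hσ, hp]
      rw [h1]
      have h2 : ¬ ((p.1 - K + h p.2, p.2) ∈ Ho) := by
        rw [hmemHo]; simp only; omega
      simp only [hτ]
      rw [dif_neg h2]
      have h4 : p.1 - K + h p.2 - h p.2 + K = p.1 := by omega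
      rw [h4]
  have hστ : ∀ p, σ (τ p) = p := by
    intro p
    by_cases hp : p ∈ Ho
    · have h1 : τ p = (e.symm ⟨p, hp⟩ : ℕ × Fin n) := by simp [hτ, hp]
      have h2 : (e.symm ⟨p, hp⟩ : ℕ × Fin n) ∈ Sm := (e.symm ⟨p, hp⟩).2
      rw [h1]
      simp only [hσ]
      rw [dif_pos h2]
      have h3 : (⟨(e.symm ⟨p, hp⟩ : ℕ × Fin n), h2⟩ : {p // p ∈ Sm}) = e.symm ⟨p, hp⟩ := rfl
      rw [h3, Equiv.apply_symm_apply]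
    · have hpH : ¬ p.1 < h p.2 := fun hlt => hp ((hmemHo p).mpr hlt)
      have h1 : τ p = (p.1 - h p.2 + K, p.2) := by simp [hτ, hp]
      rw [h1]
      have h2 : ¬ ((p.1 - h p.2 + K, p.2) ∈ Sm) := by
        rw [hmemSm]; simp only; omega
      simp only [hσ]
      rw [dif_neg h2]
      have h4 : p.1 - h p.2 + K - K + h p.2 = p.1 := by omega
      rw [h4]
  refine ⟨σ, K, Function.bijective_iff_has_inverse.mpr ⟨τ, hτσ, hστ⟩, ?_⟩
  intro x i hx
  have hp : ¬ ((x, i) ∈ Sm) := by rw [hmemSm]; simp only; omega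
  have h1 : σ (x, i) = (x - K + h i, i) := by simp [hσ, hp]
  rw [h1]
  refine ⟨?_, rfl⟩
  have := hhc i
  simp only
  omega

/-- The assignment `φ : G̃ₙ → ℤⁿ`,
`g ↦ (m_{11} − m_{12}, …, m_{n1} − m_{n2})`, is well defined (the eventual translation
vectors of `g` are unique), is a group homomorphism, its image lies in and equals the kernel
of the summation map `ℤⁿ → ℤ` (hence is isomorphic to `ℤ^{n−1}`), and its kernel is exactly
`Gₙ`.  Hence there is a short exact sequence `0 → Gₙ → G̃ₙ → ℤ^{n−1} → 0`. -/
theorem stmt_19 (n : ℕ) :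
    (∀ g : QSet n → QSet n, GTilde g →
      ∀ m m' : Fin n → ℤ × ℤ, EvVec g m → EvVec g m' → m = m') ∧
    (∀ (g h : QSet n → QSet n) (mg mh : Fin n → ℤ × ℤ), GTilde g → GTilde h →
      EvVec g mg → EvVec h mh → EvVec (fun s => h (g s)) (mg + mh)) ∧
    (∀ (g : QSet n → QSet n) (m : Fin n → ℤ × ℤ), GTilde g → EvVec g m →
      ∑ i : Fin n, ((m i).1 - (m i).2) = 0) ∧
    (∀ v : Fin n → ℤ, ∑ i : Fin n, v i = 0 →
      ∃ (g : QSet n → QSet n) (m : Fin n → ℤ × ℤ), GTilde g ∧ EvVec g m ∧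
        ∀ i, (m i).1 - (m i).2 = v i) ∧
    (∀ (g : QSet n → QSet n) (m : Fin n → ℤ × ℤ), GTilde g → EvVec g m →
      ((∀ i, (m i).1 - (m i).2 = 0) ↔ GDiag g)) := by
  refine ⟨?_, ?_, ?_, ?_, ?_⟩
  · intro g _ m m' h h'
    exact evvec_unique g m m' h h'
  · intro g h mg mh _ _ hg hh
    exact evvec_comp g h mg mh hg hh
  · intro g m hG hEv
    obtain ⟨hbij, x₀, y₀, m', hm', hA, hB⟩ := hG
    have hmm : m = m' := evvec_unique g m m' hEv ⟨x₀, y₀, hm'⟩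
    have h1 : ∑ i, (m' i).1 = 0 := sum_fst_eq_zero g hbij x₀ y₀ m' hm' hA hB
    have h2 : ∑ i, (m' i).2 = 0 := sum_snd_eq_zero g hbij x₀ y₀ m' hm' hA hB
    rw [hmm, Finset.sum_sub_distrib, h1, h2, sub_zero]
  · intro v hv
    obtain ⟨σ, K, hσbij, hσfar⟩ := exists_bij_shift v hv
    set g : QSet n → QSet n :=
      fun p => (((σ (p.1.1, p.2)).1, p.1.2), (σ (p.1.1, p.2)).2) with hgdef
    have hgbij : Function.Bijective g := by
      constructor
      · intro p p' hpp
        simp only [hgdef, Prod.mk.injEq] at hpp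
        have hσe : σ (p.1.1, p.2) = σ (p'.1.1, p'.2) :=
          Prod.ext hpp.1.1 hpp.2
        have := hσbij.1 hσe
        simp only [Prod.mk.injEq] at this
        exact Prod.ext (Prod.ext this.1 hpp.1.2) this.2
      · rintro ⟨⟨u, y⟩, j⟩
        obtain ⟨a, ha⟩ := hσbij.2 (u, j)
        refine ⟨((a.1, y), a.2), ?_⟩
        have h1 : σ (a.1, a.2) = (u, j) := by rw [show ((a.1, a.2) : ℕ × Fin n) = a from rfl, ha]
        simp only [hgdef, h1]
    have hEvF : EvVecFrom g K 0 (fun i => (v i, 0)) := by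
      intro x y i hx _
      obtain ⟨f1, f2⟩ := hσfar x i hx
      refine ⟨f2, f1, by push_cast; ring⟩
    refine ⟨g, fun i => (v i, 0), ⟨hgbij, K, 0, fun i => (v i, 0), hEvF, ?_, ?_⟩,
      ⟨K, 0, hEvF⟩, fun i => by simp⟩
    · intro x i
      exact ⟨0, (σ (x, i)).1, (σ (x, i)).2, fun y _ => ⟨rfl, rfl, by push_cast; ring⟩⟩
    · intro y i
      refine ⟨v i, y, i, fun x hx => ?_⟩
      obtain ⟨f1, f2⟩ := hσfar x i hx
      exact ⟨rfl, f2, f1⟩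
  · intro g m hG hEv
    constructor
    · intro h0
      refine ⟨hG, fun i => (m i).1, ?_⟩
      rw [show (fun i => ((m i).1, (m i).1)) = m from
        funext fun i => Prod.ext rfl (by have := h0 i; omega)]
      exact hEv
    · rintro ⟨-, k, hk⟩ i
      have h1 := evvec_unique g m (fun i => (k i, k i)) hEv hk
      have h2 := congrFun h1 i
      rw [h2]
      simp
end
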